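/- arXiv:2507.03335 — 2 statements merged into one kernel-verified Lean document; each statement's English description precedes it below -/
import Mathlib

section
/- Let E ∈ ℝ^{n×n}, F ∈ ℝ^{m×n}, G ∈ ℝ^{m×m} symmetric, q ∈ ℝⁿ, r ∈ ℝᵐ, and let û ∈ ℝⁿ, p̂ ∈ ℝᵐ. Fix positive weights α₁, α₂, α₃, β₁, β₂. Set Q = q − Eû − Fᵀp̂, R = r − Fû − Gp̂, S₁ = J_S^m Φ_G D_{S,m}⁻¹. Define K₁^R = [α₁⁻¹(ûᵀ⊗Iₙ)Σ_E, α₂⁻¹(Iₙ⊗p̂ᵀ)Σ_F, 0_{n×m(m+1)/2}], K₂^R = [0_{m×n²}, α₂⁻¹(ûᵀ⊗I_m)Σ_F, α₃⁻¹(p̂ᵀ⊗I_m)S₁], Ĩ₁ = [−β₁⁻¹Iₙ, 0_{n×m}], Ĩ₂ = [0_{m×n}, −β₂⁻¹I_m], and M = [[K₁^R, Ĩ₁],[K₂^R, Ĩ₂]]. Then MMᵀ is invertible, and the sparsity-preserving structured backward error inf{ ζ^{σ₁}(ΔE⊙Θ_E, ΔF⊙Θ_F, ΔG⊙Θ_G,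 Δq, Δr) : ΔE ∈ ℝ^{n×n}, ΔF ∈ ℝ^{m×n}, ΔG ∈ ℝ^{m×m} symmetric, Δq ∈ ℝⁿ, Δr ∈ ℝᵐ, (E+ΔE⊙Θ_E)û + (F+ΔF⊙Θ_F)ᵀp̂ = q+Δq and (F+ΔF⊙Θ_F)û + (G+ΔG⊙Θ_G)p̂ = r+Δr } is attained and equals ‖Mᵀ(MMᵀ)⁻¹[Q; R]‖₂. -/
/-!
The constraints are linear in the masked perturbation: writing `x` for its weighted vector
`[α₁ vec ΔE; α₂ vec ΔF; α₃ D_{S,m} vec_S ΔG; β₁ Δq; β₂ Δr]`, they say exactly `M x = [Q; R]`,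
and `‖x‖₂ = ζ^{σ₁}`. The blocks `-β₁⁻¹ I`, `-β₂⁻¹ I` give `M` full row rank, so `M Mᵀ` is
invertible and `x* = Mᵀ (M Mᵀ)⁻¹ [Q; R]` is the least-norm solution of `M x = [Q; R]`. Every
vector is the weighted vector of some perturbation, and masking that perturbation with the
sparsity patterns keeps it feasible without increasing its norm; hence `‖x*‖₂` is attained.
-/

open Matrix

noncomputable section

namespace GSPPBE

/-- Entrywise real part of a complex matrix. -/
def reM {I J : Type*} (A : Matrix I J ℂ) : Matrix I J ℝ := A.map Complex.re

/-- Entrywise imaginary part of a complex matrix. -/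
def imM {I J : Type*} (A : Matrix I J ℂ) : Matrix I J ℝ := A.map Complex.im

/-- Entrywise real part of a complex vector. -/
def reV {I : Type*} (v : I → ℂ) : I → ℝ := fun i => (v i).re

/-- Entrywise imaginary part of a complex vector. -/
def imV {I : Type*} (v : I → ℂ) : I → ℝ := fun i => (v i).im

/-- Frobenius norm of a matrix. -/
def frob {I J α : Type*} [Fintype I] [Fintype J] [SeminormedAddGroup α]
    (A : Matrix I J α) : ℝ :=
  Real.sqrt (∑ i, ∑ j, ‖A i j‖ ^ 2)

/-- Euclidean norm of a (finitely indexed) vector. -/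
def eunorm {I α : Type*} [Fintype I] [SeminormedAddGroup α] (v : I → α) : ℝ :=
  Real.sqrt (∑ i, ‖v i‖ ^ 2)

/-- Column-major vectorization: `vecM A (j, i) = A i j`. -/
def vecM {I J α : Type*} (A : Matrix I J α) : J × I → α := fun p => A p.2 p.1

/-- Index type for the lower triangle including the diagonal (positions of `vec_S`);
it has `m(m+1)/2` elements. -/
abbrev SymIdx (m : ℕ) := {p : Fin m × Fin m // p.2 ≤ p.1}

/-- Index type for the strictly lower triangle (positions of `vec_SK`);
it has `m(m-1)/2` elements. -/
abbrev SkewIdx (m : ℕ) := {p : Fin m × Fin m // p.2 < p.1}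

/-- `vec_S` of a (symmetric) matrix: its lower-triangular entries `Z i j`, `j ≤ i`. -/
def vecS {m : ℕ} {α : Type*} (Z : Matrix (Fin m) (Fin m) α) : SymIdx m → α :=
  fun p => Z p.1.1 p.1.2

/-- `vec_SK` of a (skew-symmetric) matrix: its strictly lower-triangular entries `Z i j`, `j < i`. -/
def vecSK {m : ℕ} {α : Type*} (Z : Matrix (Fin m) (Fin m) α) : SkewIdx m → α :=
  fun p => Z p.1.1 p.1.2

/-- `J_S^m`: its column at position `(i,j)`, `j ≤ i`, is `vec(eᵢeⱼᵀ + eⱼeᵢᵀ)` for `i > j` and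
`vec(eⱼeⱼᵀ)` for `i = j`.  Rows are vec positions `(column, row)`. -/
def JS (m : ℕ) : Matrix (Fin m × Fin m) (SymIdx m) ℝ :=
  Matrix.of fun cr p =>
    (if cr.2 = p.1.1 ∧ cr.1 = p.1.2 then (1 : ℝ) else 0) +
    (if p.1.1 ≠ p.1.2 ∧ cr.2 = p.1.2 ∧ cr.1 = p.1.1 then 1 else 0)

/-- `J_SK^m`: its column at position `(i,j)`, `j < i`, is `vec(eᵢeⱼᵀ − eⱼeᵢᵀ)`. -/
def JSK (m : ℕ) : Matrix (Fin m × Fin m) (SkewIdx m) ℝ :=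
  Matrix.of fun cr p =>
    (if cr.2 = p.1.1 ∧ cr.1 = p.1.2 then (1 : ℝ) else 0) -
    (if cr.2 = p.1.2 ∧ cr.1 = p.1.1 then 1 else 0)

open Classical in
/-- Sign pattern `Θ_X` of a matrix, with values in the same ring. -/
def theta {I J α : Type*} [Zero α] [One α] (X : Matrix I J α) : Matrix I J α :=
  Matrix.of fun i j => if X i j = 0 then 0 else 1

open Classical in
/-- Real-valued sign pattern `Θ_X` of a matrix. -/
def thetaR {I J α : Type*} [Zero α] (X : Matrix I J α) : Matrix I J ℝ :=
  Matrix.of fun i j => if X i j = 0 then 0 else 1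

/-- `Φ_X = diag(vec_S(Θ_X))`. -/
def Phi {m : ℕ} {α : Type*} [Zero α] (X : Matrix (Fin m) (Fin m) α) :
    Matrix (SymIdx m) (SymIdx m) ℝ :=
  Matrix.diagonal (vecS (thetaR X))

/-- `Ψ_X`: diagonal matrix listing the strictly lower-triangular entries of `Θ_X`
in `vec_SK` ordering. -/
def Psi {m : ℕ} {α : Type*} [Zero α] (X : Matrix (Fin m) (Fin m) α) :
    Matrix (SkewIdx m) (SkewIdx m) ℝ :=
  Matrix.diagonal (vecSK (thetaR X))

/-- `Σ_X = diag(vec(Θ_X))`. -/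
def Sig {I J α : Type*} [DecidableEq I] [DecidableEq J] [Zero α]
    (X : Matrix I J α) : Matrix (J × I) (J × I) ℝ :=
  Matrix.diagonal (vecM (thetaR X))

/-- `D_{S,m}`: diagonal entry `1` at the positions of diagonal entries `(j,j)`, `√2` elsewhere. -/
def DS (m : ℕ) : Matrix (SymIdx m) (SymIdx m) ℝ :=
  Matrix.diagonal fun p => if p.1.1 = p.1.2 then 1 else Real.sqrt 2

/-- `D_{SK,m} = √2·I`. -/
def DSK (m : ℕ) : Matrix (SkewIdx m) (SkewIdx m) ℝ :=
  Matrix.diagonal fun _ => Real.sqrt 2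

/-- `uᵀ ⊗ I_b`, viewed as a matrix acting on column-major vectorizations of `b×a` matrices. -/
def rowKronId {a b : ℕ} (u : Fin a → ℝ) : Matrix (Fin b) (Fin a × Fin b) ℝ :=
  Matrix.of fun r p => u p.1 * (if r = p.2 then 1 else 0)

/-- `I_a ⊗ vᵀ`, viewed as a matrix acting on column-major vectorizations of `b×a` matrices. -/
def idKronRow {a b : ℕ} (v : Fin b → ℝ) : Matrix (Fin a) (Fin a × Fin b) ℝ :=
  Matrix.of fun r p => (if r = p.1 then 1 else 0) * v p.2

/-- The weighted norm `ζ^{σ₁}(A,B,C,q,r)`. -/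
def zeta1 {n m : ℕ} {α : Type*} [SeminormedAddGroup α]
    (α₁ α₂ α₃ β₁ β₂ : ℝ)
    (A : Matrix (Fin n) (Fin n) α) (B : Matrix (Fin m) (Fin n) α)
    (C : Matrix (Fin m) (Fin m) α) (q : Fin n → α) (r : Fin m → α) : ℝ :=
  Real.sqrt (α₁ ^ 2 * frob A ^ 2 + α₂ ^ 2 * frob B ^ 2 + α₃ ^ 2 * frob C ^ 2 +
    β₁ ^ 2 * eunorm q ^ 2 + β₂ ^ 2 * eunorm r ^ 2)

/-- The weighted norm `ζ^{σ₂}(A,B,H,C,q,r)`. -/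
def zeta2 {n m : ℕ} {α : Type*} [SeminormedAddGroup α]
    (α₁ α₂ α₃ α₄ β₁ β₂ : ℝ)
    (A : Matrix (Fin n) (Fin n) α) (B : Matrix (Fin m) (Fin n) α)
    (H : Matrix (Fin m) (Fin n) α) (C : Matrix (Fin m) (Fin m) α)
    (q : Fin n → α) (r : Fin m → α) : ℝ :=
  Real.sqrt (α₁ ^ 2 * frob A ^ 2 + α₂ ^ 2 * frob B ^ 2 + α₃ ^ 2 * frob H ^ 2 +
    α₄ ^ 2 * frob C ^ 2 + β₁ ^ 2 * eunorm q ^ 2 + β₂ ^ 2 * eunorm r ^ 2)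

section MatrixFacts

variable {ι κ κ' : Type*}

lemma inv_smul_mulVec_smul [Fintype κ] {c : ℝ} (hc : c ≠ 0) (N : Matrix ι κ ℝ) (v : κ → ℝ) :
    (c⁻¹ • N) *ᵥ (c • v) = N *ᵥ v := by
  rw [smul_mulVec, mulVec_smul, smul_smul, inv_mul_cancel₀ hc, one_smul]

lemma injective_vecMul_fromCols [Fintype ι] {K : Matrix ι κ ℝ} {D : Matrix ι κ' ℝ}
    (hD : Function.Injective fun v => v ᵥ* D) :
    Function.Injective fun v => v ᵥ* fromCols K D := fun u v huv =>
  hD (Sum.elim_eq_iff.mp (by simpa only [vecMul_fromCols] using huv)).2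

lemma isUnit_mul_transpose_of_injective_vecMul [Fintype ι] [Fintype κ] [DecidableEq ι]
    {M : Matrix ι κ ℝ} (hM : Function.Injective fun v => v ᵥ* M) : IsUnit (M * Mᵀ) := by
  simpa [conjTranspose_eq_transpose_of_trivial] using (PosDef.mul_conjTranspose_self M hM).isUnit

end MatrixFacts

section Norms

variable {I J : Type*} [Fintype I] [Fintype J]

lemma eunorm_eq_sqrt_dotProduct (v : I → ℝ) : eunorm v = √(v ⬝ᵥ v) := by
  simp [eunorm, dotProduct, sq]

lemma eunorm_sq (v : I → ℝ) : eunorm v ^ 2 = ∑ i, v i ^ 2 := by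
  rw [eunorm, Real.sq_sqrt (by positivity)]
  simp

lemma frob_sq (A : Matrix I J ℝ) : frob A ^ 2 = ∑ i, ∑ j, A i j ^ 2 := by
  rw [frob, Real.sq_sqrt (by positivity)]
  simp

end Norms

section LeastNorm

variable {ι κ : Type*} [Fintype ι] [Fintype κ] [DecidableEq ι] {M : Matrix ι κ ℝ}
  (hM : IsUnit (M * Mᵀ)) (w : ι → ℝ)
include hM

lemma mulVec_leastNormSolution : M *ᵥ ((Mᵀ * (M * Mᵀ)⁻¹) *ᵥ w) = w := by
  rw [mulVec_mulVec, ← Matrix.mul_assoc,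
    mul_nonsing_inv _ ((isUnit_iff_isUnit_det _).mp hM), one_mulVec]

/-- The solution `Mᵀ (M Mᵀ)⁻¹ w` lies in the row space of `M`, which is orthogonal to `ker M`. -/
lemma eunorm_leastNormSolution_le {x : κ → ℝ} (hx : M *ᵥ x = w) :
    eunorm ((Mᵀ * (M * Mᵀ)⁻¹) *ᵥ w) ≤ eunorm x := by
  have hsol := mulVec_leastNormSolution hM w
  rw [← mulVec_mulVec] at hsol ⊢
  set y := (M * Mᵀ)⁻¹ *ᵥ w
  set d := x - Mᵀ *ᵥ y
  have horth : (Mᵀ *ᵥ y) ⬝ᵥ d = 0 := by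
    rw [mulVec_transpose, ← dotProduct_mulVec, mulVec_sub, hx, hsol, sub_self, dotProduct_zero]
  have hd : 0 ≤ d ⬝ᵥ d := Fintype.sum_nonneg fun i => mul_self_nonneg (d i)
  rw [eunorm_eq_sqrt_dotProduct, eunorm_eq_sqrt_dotProduct, ← add_sub_cancel (Mᵀ *ᵥ y) x,
    add_dotProduct, dotProduct_add, dotProduct_add, dotProduct_comm d, horth]
  gcongr
  linarith

end LeastNorm

section Vectorization

variable {a b m : ℕ}

lemma rowKronId_mulVec_vecM (u : Fin a → ℝ) (A : Matrix (Fin b) (Fin a) ℝ) :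
    rowKronId u *ᵥ vecM A = A *ᵥ u := by
  ext i
  simp [rowKronId, vecM, mulVec, dotProduct, Fintype.sum_prod_type, mul_comm]

lemma idKronRow_mulVec_vecM (v : Fin b → ℝ) (B : Matrix (Fin b) (Fin a) ℝ) :
    idKronRow v *ᵥ vecM B = Bᵀ *ᵥ v := by
  ext i
  simp [idKronRow, vecM, mulVec, dotProduct, Fintype.sum_prod_type, mul_comm]

lemma Sig_mulVec_vecM {I J : Type*} [Fintype I] [Fintype J] [DecidableEq I] [DecidableEq J]
    (X A : Matrix I J ℝ) : Sig X *ᵥ vecM A = vecM (A ⊙ theta X) := by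
  ext p
  simp [Sig, mulVec_diagonal, vecM, theta, thetaR, mul_comm]

lemma Phi_mulVec_vecS (X Z : Matrix (Fin m) (Fin m) ℝ) :
    Phi X *ᵥ vecS Z = vecS (Z ⊙ theta X) := by
  ext p
  simp [Phi, mulVec_diagonal, vecS, theta, thetaR, mul_comm]

lemma sum_symIdx_eq_sum_ite {R : Type*} [AddCommMonoid R] (f : Fin m × Fin m → R) :
    ∑ p : SymIdx m, f p = ∑ p, if p.2 ≤ p.1 then f p else 0 := by
  rw [← Finset.sum_filter]
  exact (Finset.sum_subtype _ (by simp) f).symm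

lemma JS_mulVec_vecS {Z : Matrix (Fin m) (Fin m) ℝ} (hZ : Z.IsSymm) :
    JS m *ᵥ vecS Z = vecM Z := by
  ext ⟨j, i⟩
  simp only [JS, vecS, vecM, mulVec, dotProduct, of_apply, add_mul, Finset.sum_add_distrib]
  rw [sum_symIdx_eq_sum_ite (fun p => (if i = p.1 ∧ j = p.2 then 1 else 0) * Z p.1 p.2),
    sum_symIdx_eq_sum_ite (fun p => (if p.1 ≠ p.2 ∧ i = p.2 ∧ j = p.1 then 1 else 0) * Z p.1 p.2),
    Fintype.sum_eq_single (i, j) (fun p hp => by simp [Prod.ext_iff] at hp ⊢; grind),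
    Fintype.sum_eq_single (j, i) (fun p hp => by simp [Prod.ext_iff] at hp ⊢; grind)]
  rcases lt_trichotomy i j with h | rfl | h
  · simp [h.not_ge, h.le, h.ne', hZ.apply]
  · simp
  · simp [h.le, h.not_ge]

lemma isUnit_DS : IsUnit (DS m) := by
  refine isUnit_diagonal.mpr (Pi.isUnit_iff.mpr fun p => ?_)
  split_ifs <;> simp

lemma inv_DS_mulVec_DS_mulVec (v : SymIdx m → ℝ) : (DS m)⁻¹ *ᵥ (DS m *ᵥ v) = v := by
  rw [mulVec_mulVec, nonsing_inv_mul _ ((isUnit_iff_isUnit_det _).mp isUnit_DS), one_mulVec]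

/-- The weights `√2` of `D_{S,m}` account for each off-diagonal entry of `Z` occurring twice. -/
lemma sum_sq_DS_mulVec_vecS {Z : Matrix (Fin m) (Fin m) ℝ} (hZ : Z.IsSymm) :
    ∑ p, (DS m *ᵥ vecS Z) p ^ 2 = ∑ i, ∑ j, Z i j ^ 2 := by
  have hswap : ∑ p : Fin m × Fin m, (if p.1 < p.2 then Z p.1 p.2 ^ 2 else 0) =
      ∑ p : Fin m × Fin m, if p.2 < p.1 then Z p.1 p.2 ^ 2 else 0 :=
    Fintype.sum_equiv (Equiv.prodComm _ _) _ _ fun p => by simp [hZ.apply p.1 p.2]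
  calc ∑ p, (DS m *ᵥ vecS Z) p ^ 2
      = ∑ p : Fin m × Fin m,
          if p.2 ≤ p.1 then ((if p.1 = p.2 then 1 else √2) * Z p.1 p.2) ^ 2 else 0 := by
        rw [← sum_symIdx_eq_sum_ite (fun p => ((if p.1 = p.2 then 1 else √2) * Z p.1 p.2) ^ 2)]
        simp [DS, mulVec_diagonal, vecS]
    _ = ∑ p : Fin m × Fin m, ((if p.2 ≤ p.1 then Z p.1 p.2 ^ 2 else 0) +
          if p.2 < p.1 then Z p.1 p.2 ^ 2 else 0) := by
        refine Fintype.sum_congr _ _ fun p => ?_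
        rcases lt_trichotomy p.2 p.1 with h | h | h
        · simp [h.le, h, h.ne', mul_pow]
          ring
        · simp [h]
        · simp [h.not_ge, h.not_gt]
    _ = ∑ p : Fin m × Fin m, ((if p.2 ≤ p.1 then Z p.1 p.2 ^ 2 else 0) +
          if p.1 < p.2 then Z p.1 p.2 ^ 2 else 0) := by
        rw [Finset.sum_add_distrib, Finset.sum_add_distrib, hswap]
    _ = ∑ i, ∑ j, Z i j ^ 2 := by
        rw [← Fintype.sum_prod_type']
        refine Fintype.sum_congr _ _ fun p => ?_
        by_cases h : p.2 ≤ p.1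
        · simp [h, h.not_gt]
        · simp [h, not_le.mp h]

end Vectorization

section SparsityPattern

variable {I J : Type*}

lemma hadamard_theta_hadamard_theta (A X : Matrix I J ℝ) :
    A ⊙ theta X ⊙ theta X = A ⊙ theta X := by
  ext i j
  by_cases h : X i j = 0 <;> simp [theta, h]

lemma isSymm_hadamard_theta {A X : Matrix I I ℝ} (hA : A.IsSymm) (hX : X.IsSymm) :
    (A ⊙ theta X).IsSymm := by
  ext i j
  simp [theta, hA.apply, hX.apply]

lemma frob_hadamard_theta_le [Fintype I] [Fintype J] (A X : Matrix I J ℝ) :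
    frob (A ⊙ theta X) ≤ frob A := by
  unfold frob
  gcongr with i _ j _
  by_cases h : X i j = 0 <;> simp [theta, h]

lemma zeta1_hadamard_theta_le {n m : ℕ} (α₁ α₂ α₃ β₁ β₂ : ℝ) (E A : Matrix (Fin n) (Fin n) ℝ)
    (F B : Matrix (Fin m) (Fin n) ℝ) (G Z : Matrix (Fin m) (Fin m) ℝ) (dq : Fin n → ℝ)
    (dr : Fin m → ℝ) :
    zeta1 α₁ α₂ α₃ β₁ β₂ (A ⊙ theta E) (B ⊙ theta F) (Z ⊙ theta G) dq dr ≤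
      zeta1 α₁ α₂ α₃ β₁ β₂ A B Z dq dr := by
  unfold zeta1
  gcongr <;> first | exact Real.sqrt_nonneg _ | exact frob_hadamard_theta_le _ _

end SparsityPattern

section StructuredBackwardError

variable {n m : ℕ} (α₁ α₂ α₃ β₁ β₂ : ℝ)

def perturbationVec (A : Matrix (Fin n) (Fin n) ℝ) (B : Matrix (Fin m) (Fin n) ℝ)
    (Z : Matrix (Fin m) (Fin m) ℝ) (dq : Fin n → ℝ) (dr : Fin m → ℝ) :
    ((Fin n × Fin n) ⊕ ((Fin n × Fin m) ⊕ SymIdx m)) ⊕ (Fin n ⊕ Fin m) → ℝ :=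
  Sum.elim (Sum.elim (α₁ • vecM A) (Sum.elim (α₂ • vecM B) (α₃ • (DS m *ᵥ vecS Z))))
    (Sum.elim (β₁ • dq) (β₂ • dr))

lemma eunorm_perturbationVec (A : Matrix (Fin n) (Fin n) ℝ) (B : Matrix (Fin m) (Fin n) ℝ)
    {Z : Matrix (Fin m) (Fin m) ℝ} (hZ : Z.IsSymm) (dq : Fin n → ℝ) (dr : Fin m → ℝ) :
    eunorm (perturbationVec α₁ α₂ α₃ β₁ β₂ A B Z dq dr) = zeta1 α₁ α₂ α₃ β₁ β₂ A B Z dq dr := by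
  rw [eunorm, zeta1, frob_sq, frob_sq, frob_sq, eunorm_sq, eunorm_sq, ← sum_sq_DS_mulVec_vecS hZ]
  congr 1
  simp only [Real.norm_eq_abs, sq_abs, perturbationVec, Fintype.sum_sum_type, Sum.elim_inl,
    Sum.elim_inr, Pi.smul_apply, smul_eq_mul, mul_pow, ← Finset.mul_sum, vecM,
    Fintype.sum_prod_type]
  rw [Finset.sum_comm (f := fun i j => A j i ^ 2), Finset.sum_comm (f := fun i j => B j i ^ 2)]
  ring

lemma exists_perturbationVec_eq (hα₁ : α₁ ≠ 0) (hα₂ : α₂ ≠ 0) (hα₃ : α₃ ≠ 0) (hβ₁ : β₁ ≠ 0)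
    (hβ₂ : β₂ ≠ 0) (x : ((Fin n × Fin n) ⊕ ((Fin n × Fin m) ⊕ SymIdx m)) ⊕ (Fin n ⊕ Fin m) → ℝ) :
    ∃ A B Z dq dr, Z.IsSymm ∧ perturbationVec α₁ α₂ α₃ β₁ β₂ A B Z dq dr = x := by
  set v : SymIdx m → ℝ := α₃⁻¹ • (DS m)⁻¹ *ᵥ fun p => x (.inl (.inr (.inr p)))
  set Z : Matrix (Fin m) (Fin m) ℝ := of fun i j => v ⟨(max i j, min i j), min_le_max⟩
  have hZ : Z.IsSymm := by ext i j; simp [Z, max_comm, min_comm]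
  have hvecS : vecS Z = v := by
    ext ⟨⟨i, j⟩, h⟩
    simp [Z, vecS, max_eq_left h, min_eq_right h]
  refine ⟨of fun i j => α₁⁻¹ * x (.inl (.inl (j, i))),
    of fun i j => α₂⁻¹ * x (.inl (.inr (.inl (j, i)))), Z,
    β₁⁻¹ • fun i => x (.inr (.inl i)), β₂⁻¹ • fun j => x (.inr (.inr j)), hZ, ?_⟩
  ext ((c | c | p) | i | j)
  · simp [perturbationVec, vecM, hα₁]
  · simp [perturbationVec, vecM, hα₂]
  · simp [perturbationVec, hvecS, v, mulVec_smul, mulVec_mulVec,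
      mul_nonsing_inv _ ((isUnit_iff_isUnit_det _).mp isUnit_DS), hα₃]
  · simp [perturbationVec, hβ₁]
  · simp [perturbationVec, hβ₂]

variable (E : Matrix (Fin n) (Fin n) ℝ) (F : Matrix (Fin m) (Fin n) ℝ)
  (G : Matrix (Fin m) (Fin m) ℝ) (uh : Fin n → ℝ) (ph : Fin m → ℝ)

/-- `M` of the theorem. Fixing the sizes of `rowKronId` and `idKronRow` makes the products
elaborate with `Matrix` multiplication; left open, they pick up `CStarMatrix`'s, which `rw` cannot
see through. -/
def structuredBEMatrix : Matrix (Fin n ⊕ Fin m)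
    (((Fin n × Fin n) ⊕ ((Fin n × Fin m) ⊕ SymIdx m)) ⊕ (Fin n ⊕ Fin m)) ℝ :=
  fromBlocks
    (fromCols (α₁⁻¹ • (rowKronId (b := n) uh * Sig E))
      (fromCols (α₂⁻¹ • (idKronRow (a := n) ph * Sig F)) 0))
    (fromCols ((-(β₁⁻¹)) • (1 : Matrix (Fin n) (Fin n) ℝ)) 0)
    (fromCols 0 (fromCols (α₂⁻¹ • (rowKronId (b := m) uh * Sig F))
      (α₃⁻¹ • (rowKronId (b := m) ph * (JS m * Phi G * (DS m)⁻¹)))))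
    (fromCols 0 ((-(β₂⁻¹)) • (1 : Matrix (Fin m) (Fin m) ℝ)))

lemma isUnit_structuredBEMatrix_mul_transpose (hβ₁ : β₁ ≠ 0) (hβ₂ : β₂ ≠ 0) :
    IsUnit (structuredBEMatrix α₁ α₂ α₃ β₁ β₂ E F G uh ph *
      (structuredBEMatrix α₁ α₂ α₃ β₁ β₂ E F G uh ph)ᵀ) := by
  refine isUnit_mul_transpose_of_injective_vecMul ?_
  rw [structuredBEMatrix, ← fromCols_fromRows_eq_fromBlocks]
  refine injective_vecMul_fromCols ?_
  rw [fromRows_fromCols_eq_fromBlocks, vecMul_injective_iff_isUnit, smul_one_eq_diagonal,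
    smul_one_eq_diagonal, fromBlocks_diagonal, isUnit_diagonal, Pi.isUnit_iff]
  rintro (i | j) <;> simp [hβ₁, hβ₂]

variable {α₁ α₂ α₃ β₁ β₂ G} (hα₁ : α₁ ≠ 0) (hα₂ : α₂ ≠ 0) (hα₃ : α₃ ≠ 0) (hβ₁ : β₁ ≠ 0)
  (hβ₂ : β₂ ≠ 0) (hG : G.IsSymm)
include hα₁ hα₂ hα₃ hβ₁ hβ₂ hG

lemma structuredBEMatrix_mulVec_perturbationVec (A : Matrix (Fin n) (Fin n) ℝ)
    (B : Matrix (Fin m) (Fin n) ℝ) {Z : Matrix (Fin m) (Fin m) ℝ} (hZ : Z.IsSymm)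
    (dq : Fin n → ℝ) (dr : Fin m → ℝ) :
    structuredBEMatrix α₁ α₂ α₃ β₁ β₂ E F G uh ph *ᵥ perturbationVec α₁ α₂ α₃ β₁ β₂ A B Z dq dr =
      Sum.elim ((A ⊙ theta E) *ᵥ uh + (B ⊙ theta F)ᵀ *ᵥ ph - dq)
        ((B ⊙ theta F) *ᵥ uh + (Z ⊙ theta G) *ᵥ ph - dr) := by
  simp only [structuredBEMatrix, perturbationVec, fromBlocks_mulVec, Sum.elim_comp_inl,
    Sum.elim_comp_inr, fromCols_mulVec_sumElim, zero_mulVec, add_zero, zero_add, neg_smul,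
    neg_mulVec, inv_smul_mulVec_smul hα₁, inv_smul_mulVec_smul hα₂, inv_smul_mulVec_smul hα₃,
    inv_smul_mulVec_smul hβ₁, inv_smul_mulVec_smul hβ₂, one_mulVec]
  simp only [← mulVec_mulVec, inv_DS_mulVec_DS_mulVec, Sig_mulVec_vecM, Phi_mulVec_vecS,
    JS_mulVec_vecS (isSymm_hadamard_theta hZ hG), rowKronId_mulVec_vecM, idKronRow_mulVec_vecM,
    ← sub_eq_add_neg]

lemma structuredBEMatrix_mulVec_perturbationVec_hadamard_theta (A : Matrix (Fin n) (Fin n) ℝ)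
    (B : Matrix (Fin m) (Fin n) ℝ) {Z : Matrix (Fin m) (Fin m) ℝ} (hZ : Z.IsSymm)
    (dq : Fin n → ℝ) (dr : Fin m → ℝ) :
    structuredBEMatrix α₁ α₂ α₃ β₁ β₂ E F G uh ph *ᵥ
        perturbationVec α₁ α₂ α₃ β₁ β₂ (A ⊙ theta E) (B ⊙ theta F) (Z ⊙ theta G) dq dr =
      structuredBEMatrix α₁ α₂ α₃ β₁ β₂ E F G uh ph *ᵥ
        perturbationVec α₁ α₂ α₃ β₁ β₂ A B Z dq dr := by
  rw [structuredBEMatrix_mulVec_perturbationVec E F uh ph hα₁ hα₂ hα₃ hβ₁ hβ₂ hG _ _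
      (isSymm_hadamard_theta hZ hG),
    structuredBEMatrix_mulVec_perturbationVec E F uh ph hα₁ hα₂ hα₃ hβ₁ hβ₂ hG _ _ hZ,
    hadamard_theta_hadamard_theta, hadamard_theta_hadamard_theta, hadamard_theta_hadamard_theta]

lemma structuredBEMatrix_mulVec_perturbationVec_eq_iff (q : Fin n → ℝ) (r : Fin m → ℝ)
    (A : Matrix (Fin n) (Fin n) ℝ) (B : Matrix (Fin m) (Fin n) ℝ) {Z : Matrix (Fin m) (Fin m) ℝ}
    (hZ : Z.IsSymm) (dq : Fin n → ℝ) (dr : Fin m → ℝ) :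
    structuredBEMatrix α₁ α₂ α₃ β₁ β₂ E F G uh ph *ᵥ perturbationVec α₁ α₂ α₃ β₁ β₂ A B Z dq dr =
        Sum.elim (q - E *ᵥ uh - Fᵀ *ᵥ ph) (r - F *ᵥ uh - G *ᵥ ph) ↔
      (E + A ⊙ theta E) *ᵥ uh + (F + B ⊙ theta F)ᵀ *ᵥ ph = q + dq ∧
        (F + B ⊙ theta F) *ᵥ uh + (G + Z ⊙ theta G) *ᵥ ph = r + dr := by
  rw [structuredBEMatrix_mulVec_perturbationVec E F uh ph hα₁ hα₂ hα₃ hβ₁ hβ₂ hG _ _ hZ,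
    Sum.elim_eq_iff]
  simp only [add_mulVec, transpose_add]
  constructor <;> rintro ⟨h₁, h₂⟩
  · exact ⟨by linear_combination h₁, by linear_combination h₂⟩
  · exact ⟨by linear_combination h₁, by linear_combination h₂⟩

end StructuredBackwardError

/-- Corollary 3.8: sparsity-preserving structured backward error for the real
GSPP with general `E`, `F`, symmetric `G`, and `H = F`. -/
theorem structured_BE_real_case_c
    (n m : ℕ) (E : Matrix (Fin n) (Fin n) ℝ)
    (F : Matrix (Fin m) (Fin n) ℝ) (G : Matrix (Fin m) (Fin m) ℝ) (hG : G.IsSymm)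
    (q : Fin n → ℝ) (r : Fin m → ℝ) (uh : Fin n → ℝ) (ph : Fin m → ℝ)
    (α₁ α₂ α₃ β₁ β₂ : ℝ)
    (hα₁ : 0 < α₁) (hα₂ : 0 < α₂) (hα₃ : 0 < α₃) (hβ₁ : 0 < β₁) (hβ₂ : 0 < β₂) :
    let Q : Fin n → ℝ := q - E *ᵥ uh - Fᵀ *ᵥ ph
    let R : Fin m → ℝ := r - F *ᵥ uh - G *ᵥ ph
    let S₁ := JS m * Phi G * (DS m)⁻¹
    let K₁ : Matrix (Fin n) ((Fin n × Fin n) ⊕ ((Fin n × Fin m) ⊕ SymIdx m)) ℝ :=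
      fromCols (α₁⁻¹ • (rowKronId uh * Sig E))
        (fromCols (α₂⁻¹ • (idKronRow ph * Sig F)) 0)
    let K₂ : Matrix (Fin m) ((Fin n × Fin n) ⊕ ((Fin n × Fin m) ⊕ SymIdx m)) ℝ :=
      fromCols 0
        (fromCols (α₂⁻¹ • (rowKronId uh * Sig F)) (α₃⁻¹ • (rowKronId ph * S₁)))
    let I₁ : Matrix (Fin n) (Fin n ⊕ Fin m) ℝ :=
      fromCols ((-(β₁⁻¹)) • (1 : Matrix (Fin n) (Fin n) ℝ)) 0
    let I₂ : Matrix (Fin m) (Fin n ⊕ Fin m) ℝ :=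
      fromCols 0 ((-(β₂⁻¹)) • (1 : Matrix (Fin m) (Fin m) ℝ))
    let M := fromBlocks K₁ I₁ K₂ I₂
    let w : Fin n ⊕ Fin m → ℝ := Sum.elim Q R
    IsUnit (M * Mᵀ) ∧
      IsLeast
        {t : ℝ | ∃ (ΔE : Matrix (Fin n) (Fin n) ℝ) (ΔF : Matrix (Fin m) (Fin n) ℝ)
            (ΔG : Matrix (Fin m) (Fin m) ℝ) (Δq : Fin n → ℝ) (Δr : Fin m → ℝ),
            ΔG.IsSymm ∧
            (E + ΔE.hadamard (theta E)) *ᵥ uh + (F + ΔF.hadamard (theta F))ᵀ *ᵥ ph = q + Δq ∧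
            (F + ΔF.hadamard (theta F)) *ᵥ uh + (G + ΔG.hadamard (theta G)) *ᵥ ph = r + Δr ∧
            t = zeta1 α₁ α₂ α₃ β₁ β₂ (ΔE.hadamard (theta E)) (ΔF.hadamard (theta F))
                  (ΔG.hadamard (theta G)) Δq Δr}
        (eunorm ((Mᵀ * (M * Mᵀ)⁻¹) *ᵥ w)) := by
  intro Q R S₁ K₁ K₂ I₁ I₂ M w
  have hunit : IsUnit (M * Mᵀ) :=
    isUnit_structuredBEMatrix_mul_transpose α₁ α₂ α₃ β₁ β₂ E F G uh ph hβ₁.ne' hβ₂.ne'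
  have feasible_iff := structuredBEMatrix_mulVec_perturbationVec_eq_iff E F uh ph
    hα₁.ne' hα₂.ne' hα₃.ne' hβ₁.ne' hβ₂.ne' hG q r
  have masked := structuredBEMatrix_mulVec_perturbationVec_hadamard_theta E F uh ph
    hα₁.ne' hα₂.ne' hα₃.ne' hβ₁.ne' hβ₂.ne' hG
  refine ⟨hunit, ?_, ?_⟩
  · obtain ⟨A, B, Z, dq, dr, hZ, hx⟩ := exists_perturbationVec_eq α₁ α₂ α₃ β₁ β₂
      hα₁.ne' hα₂.ne' hα₃.ne' hβ₁.ne' hβ₂.ne' ((Mᵀ * (M * Mᵀ)⁻¹) *ᵥ w)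
    have hsol : M *ᵥ perturbationVec α₁ α₂ α₃ β₁ β₂ A B Z dq dr = w :=
      hx ▸ mulVec_leastNormSolution hunit w
    obtain ⟨h₁, h₂⟩ := (feasible_iff A B hZ dq dr).mp hsol
    refine ⟨A, B, Z, dq, dr, hZ, h₁, h₂, le_antisymm ?_ ?_⟩
    · rw [← eunorm_perturbationVec _ _ _ _ _ _ _ (isSymm_hadamard_theta hZ hG)]
      exact eunorm_leastNormSolution_le hunit w ((masked A B hZ dq dr).trans hsol)
    · calc _ ≤ zeta1 α₁ α₂ α₃ β₁ β₂ A B Z dq dr := zeta1_hadamard_theta_le ..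
        _ = _ := by rw [← hx, eunorm_perturbationVec _ _ _ _ _ _ _ hZ]
  · rintro t ⟨ΔE, ΔF, ΔG, Δq, Δr, hΔG, h₁, h₂, rfl⟩
    rw [← eunorm_perturbationVec _ _ _ _ _ _ _ (isSymm_hadamard_theta hΔG hG)]
    exact eunorm_leastNormSolution_le hunit w
      ((masked _ _ hΔG _ _).trans ((feasible_iff _ _ hΔG _ _).mpr ⟨h₁, h₂⟩))

end GSPPBE
end
end

section
/- Let 𝔅 ∈ ℂ^{N×N} with 𝔅 ≠ 0, f ∈ ℂ^N with f ≠ 0, and x̂ ∈ ℂ^N. Then the normwise unstructured backward error inf{ sqrt(‖Δ𝔅‖_F²/‖𝔅‖_F² + ‖Δf‖₂²/‖f‖₂²) : Δ𝔅 ∈ ℂ^{N×N}, Δf ∈ ℂ^N, (𝔅+Δ𝔅)x̂ = f+Δf } is attained and equals ‖f − 𝔅x̂‖₂ / sqrt(‖𝔅‖_F² ‖x̂‖₂² + ‖f‖₂²). -/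
open Matrix

noncomputable section

namespace GSPPBE

lemma eunorm_nonneg {I α : Type*} [Fintype I] [SeminormedAddGroup α] (v : I → α) :
    0 ≤ eunorm v := Real.sqrt_nonneg _

lemma frob_nonneg {I J α : Type*} [Fintype I] [Fintype J] [SeminormedAddGroup α]
    (A : Matrix I J α) : 0 ≤ frob A := Real.sqrt_nonneg _

lemma sq_eunorm {I α : Type*} [Fintype I] [SeminormedAddGroup α] (v : I → α) :
    eunorm v ^ 2 = ∑ i, ‖v i‖ ^ 2 := Real.sq_sqrt (by positivity)

lemma sq_frob {I J α : Type*} [Fintype I] [Fintype J] [SeminormedAddGroup α]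
    (A : Matrix I J α) : frob A ^ 2 = ∑ i, ∑ j, ‖A i j‖ ^ 2 := Real.sq_sqrt (by positivity)

lemma eunorm_pos {N : ℕ} {v : Fin N → ℂ} (hv : v ≠ 0) : 0 < eunorm v := by
  apply Real.sqrt_pos.mpr
  obtain ⟨i, hi⟩ : ∃ i, v i ≠ 0 := by
    by_contra h; push_neg at h; exact hv (funext h)
  exact Finset.sum_pos' (fun j _ => by positivity)
    ⟨i, Finset.mem_univ i, pow_pos (norm_pos_iff.mpr hi) 2⟩

lemma frob_pos {N : ℕ} {B : Matrix (Fin N) (Fin N) ℂ} (hB : B ≠ 0) : 0 < frob B := by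
  apply Real.sqrt_pos.mpr
  obtain ⟨i, j, hij⟩ : ∃ i j, B i j ≠ 0 := by
    by_contra h; push_neg at h; exact hB (by ext i j; simpa using h i j)
  refine Finset.sum_pos' (fun a _ => Finset.sum_nonneg fun b _ => by positivity)
    ⟨i, Finset.mem_univ i, Finset.sum_pos' (fun b _ => by positivity)
      ⟨j, Finset.mem_univ j, pow_pos (norm_pos_iff.mpr hij) 2⟩⟩

lemma eunorm_eq_norm {N : ℕ} (v : Fin N → ℂ) :
    eunorm v = ‖(WithLp.equiv 2 (Fin N → ℂ)).symm v‖ := by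
  rw [EuclideanSpace.norm_eq]; rfl

lemma eunorm_add_le {N : ℕ} (u v : Fin N → ℂ) :
    eunorm (u + v) ≤ eunorm u + eunorm v := by
  rw [eunorm_eq_norm, eunorm_eq_norm, eunorm_eq_norm]
  exact norm_add_le _ _

lemma eunorm_neg {N : ℕ} (v : Fin N → ℂ) : eunorm (-v) = eunorm v := by
  simp [eunorm]

lemma eunorm_mulVec_le {N : ℕ} (A : Matrix (Fin N) (Fin N) ℂ) (x : Fin N → ℂ) :
    eunorm (A *ᵥ x) ≤ frob A * eunorm x := by
  rw [eunorm, frob, eunorm, ← Real.sqrt_mul (by positivity)]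
  apply Real.sqrt_le_sqrt
  rw [Finset.sum_mul]
  refine Finset.sum_le_sum fun i _ => ?_
  calc ‖(A *ᵥ x) i‖ ^ 2 ≤ (∑ j, ‖A i j‖ * ‖x j‖) ^ 2 := by
        apply pow_le_pow_left₀ (norm_nonneg _)
        have h1 : (A *ᵥ x) i = ∑ j, A i j * x j := rfl
        rw [h1]
        refine (norm_sum_le (E := ℂ) Finset.univ _).trans (le_of_eq ?_)
        simp [norm_mul]
    _ ≤ (∑ j, ‖A i j‖ ^ 2) * (∑ j, ‖x j‖ ^ 2) :=
        Finset.sum_mul_sq_le_sq_mul_sq _ _ _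

lemma frob_rank_one {N : ℕ} (c : ℝ) (hc : 0 ≤ c) (r x : Fin N → ℂ) :
    frob (Matrix.of fun i j => (c : ℂ) * r i * (starRingEnd ℂ) (x j)) ^ 2
      = c ^ 2 * (eunorm r ^ 2 * eunorm x ^ 2) := by
  rw [sq_frob, sq_eunorm, sq_eunorm]
  calc ∑ i, ∑ j, ‖(Matrix.of fun i j => (c : ℂ) * r i * (starRingEnd ℂ) (x j)) i j‖ ^ 2
      = ∑ i, ∑ j, c ^ 2 * (‖r i‖ ^ 2 * ‖x j‖ ^ 2) := by
        refine Finset.sum_congr rfl fun i _ => Finset.sum_congr rfl fun j _ => ?_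
        simp only [Matrix.of_apply, norm_mul, RCLike.norm_conj, Complex.norm_real,
          Real.norm_eq_abs, abs_of_nonneg hc]
        ring
    _ = c ^ 2 * ((∑ i, ‖r i‖ ^ 2) * (∑ j, ‖x j‖ ^ 2)) := by
        rw [Finset.sum_mul_sum, Finset.mul_sum]
        exact Finset.sum_congr rfl fun i _ => by rw [Finset.mul_sum]

/-- Rigal–Gaches: the normwise unstructured backward error is attained and
equals `‖f − 𝔅x̂‖₂ / sqrt(‖𝔅‖_F²‖x̂‖₂² + ‖f‖₂²)`. -/
theorem unstructured_BE_formula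
    (N : ℕ) (B : Matrix (Fin N) (Fin N) ℂ) (hB : B ≠ 0)
    (f : Fin N → ℂ) (hf : f ≠ 0) (x : Fin N → ℂ) :
    IsLeast
      {t : ℝ | ∃ (ΔB : Matrix (Fin N) (Fin N) ℂ) (Δf : Fin N → ℂ),
          (B + ΔB) *ᵥ x = f + Δf ∧
          t = Real.sqrt (frob ΔB ^ 2 / frob B ^ 2 + eunorm Δf ^ 2 / eunorm f ^ 2)}
      (eunorm (f - B *ᵥ x) / Real.sqrt (frob B ^ 2 * eunorm x ^ 2 + eunorm f ^ 2)) := by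
  have hβ : 0 < frob B := frob_pos hB
  have hφ : 0 < eunorm f := eunorm_pos hf
  set r : Fin N → ℂ := f - B *ᵥ x with hr
  set β2 : ℝ := frob B ^ 2 with hβ2def
  set ξ2 : ℝ := eunorm x ^ 2 with hξ2def
  set φ2 : ℝ := eunorm f ^ 2 with hφ2def
  set K : ℝ := β2 * ξ2 + φ2 with hKdef
  have hβ2 : 0 < β2 := by positivity
  have hφ2 : 0 < φ2 := by positivity
  have hξ2 : 0 ≤ ξ2 := by rw [hξ2def]; positivity
  have hK : 0 < K := by rw [hKdef]; positivity
  have hcd : (0:ℝ) ≤ β2 / K := by positivity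
  constructor
  · -- membership: exhibit the optimal perturbation
    refine ⟨Matrix.of fun i j => ((β2 / K : ℝ) : ℂ) * r i * (starRingEnd ℂ) (x j),
            fun i => -(((φ2 / K : ℝ) : ℂ) * r i), ?_, ?_⟩
    · -- the constraint
      funext i
      have hxx : ∑ j, (starRingEnd ℂ) (x j) * x j = ((ξ2 : ℝ) : ℂ) := by
        have h0 : ξ2 = ∑ j, ‖x j‖ ^ 2 := sq_eunorm x
        rw [h0]
        push_cast
        refine Finset.sum_congr rfl fun j _ => ?_
        rw [Complex.conj_mul']
      have hmv : ((B + Matrix.of fun i j => ((β2 / K : ℝ) : ℂ) * r i *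
          (starRingEnd ℂ) (x j)) *ᵥ x) i
          = (B *ᵥ x) i + ((β2 / K : ℝ) : ℂ) * r i * ((ξ2 : ℝ) : ℂ) := by
        rw [Matrix.add_mulVec, Pi.add_apply]
        congr 1
        show ∑ j, (((β2 / K : ℝ) : ℂ) * r i * (starRingEnd ℂ) (x j)) * x j = _
        rw [← hxx, Finset.mul_sum]
        exact Finset.sum_congr rfl fun j _ => by ring
      rw [hmv]
      have hri : r i = f i - (B *ᵥ x) i := rfl
      have hcoef : ((β2 / K : ℝ) : ℂ) * ((ξ2 : ℝ) : ℂ) + ((φ2 / K : ℝ) : ℂ) = 1 := by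
        have hreal : β2 / K * ξ2 + φ2 / K = 1 := by
          rw [hKdef]
          field_simp
        exact_mod_cast hreal
      show (B *ᵥ x) i + ((β2 / K : ℝ) : ℂ) * r i * ((ξ2 : ℝ) : ℂ)
          = f i + -(((φ2 / K : ℝ) : ℂ) * r i)
      linear_combination r i * hcoef + hri
    · -- the value
      have hfr := frob_rank_one (β2 / K) hcd r x
      have hef : eunorm (fun i => -(((φ2 / K : ℝ) : ℂ) * r i)) ^ 2
          = (φ2 / K) ^ 2 * eunorm r ^ 2 := by
        rw [sq_eunorm, sq_eunorm, Finset.mul_sum]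
        refine Finset.sum_congr rfl fun i _ => ?_
        simp only [norm_neg, norm_mul, Complex.norm_real, Real.norm_eq_abs,
          abs_of_nonneg (le_of_lt (div_pos hφ2 hK))]
        ring
      rw [hfr, hef]
      have hval : (β2 / K) ^ 2 * (eunorm r ^ 2 * ξ2) / β2
          + (φ2 / K) ^ 2 * eunorm r ^ 2 / φ2 = eunorm r ^ 2 / K := by
        rw [hKdef]
        field_simp
      rw [hval, Real.sqrt_div (sq_nonneg _), Real.sqrt_sq (eunorm_nonneg r)]
  · -- lower bound
    rintro t ⟨ΔB, Δf, hcon, rfl⟩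
    rw [Matrix.add_mulVec] at hcon
    have hres : r = ΔB *ᵥ x - Δf := by
      rw [hr, eq_sub_iff_add_eq.mpr hcon.symm]
      abel
    have h1 : eunorm r ≤ frob ΔB * eunorm x + eunorm Δf := by
      rw [hres, sub_eq_add_neg]
      exact (eunorm_add_le _ _).trans
        (add_le_add (eunorm_mulVec_le _ _) (le_of_eq (eunorm_neg _)))
    rw [div_le_iff₀ (Real.sqrt_pos.mpr hK)]
    have key : eunorm r ^ 2 ≤ (frob ΔB ^ 2 / β2 + eunorm Δf ^ 2 / φ2) * K := by
      have h2 : eunorm r ^ 2 ≤ (frob ΔB * eunorm x + eunorm Δf) ^ 2 :=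
        pow_le_pow_left₀ (eunorm_nonneg r) h1 2
      refine h2.trans ?_
      have hmul : (frob ΔB * eunorm x + eunorm Δf) ^ 2 * (β2 * φ2)
          ≤ ((frob ΔB ^ 2 / β2 + eunorm Δf ^ 2 / φ2) * K) * (β2 * φ2) := by
        have expand : ((frob ΔB ^ 2 / β2 + eunorm Δf ^ 2 / φ2) * K) * (β2 * φ2)
            = (frob ΔB ^ 2 * φ2 + eunorm Δf ^ 2 * β2) * K := by
          field_simp
        rw [expand, hKdef, hξ2def]
        nlinarith [sq_nonneg (frob ΔB * φ2 - eunorm Δf * β2 * eunorm x), hβ2, hφ2,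
          mul_pos hβ2 hφ2]
      exact le_of_mul_le_mul_right hmul (by positivity)
    calc eunorm r = Real.sqrt (eunorm r ^ 2) := (Real.sqrt_sq (eunorm_nonneg r)).symm
      _ ≤ Real.sqrt ((frob ΔB ^ 2 / β2 + eunorm Δf ^ 2 / φ2) * K) := Real.sqrt_le_sqrt key
      _ = Real.sqrt (frob ΔB ^ 2 / β2 + eunorm Δf ^ 2 / φ2) * Real.sqrt K :=
          Real.sqrt_mul (by positivity) _


end GSPPBE
end
end
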